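/- arXiv:1202.3399 — 2 statements merged into one kernel-verified Lean document; each statement's English description precedes it below -/
import Mathlib

section
/- Let W be the block matrix [W₁; W₂] obtained by stacking W₁ (m₁×n) on top of W₂ (m₂×n). Then the sum of the singular values of W is at most the sum of the singular values of W₁ plus the sum of the singular values of W₂, i.e., trace(√(WᵀW)) ≤ trace(√(W₁ᵀW₁)) + trace(√(W₂ᵀW₂)). -/
open Matrix

section
open scoped ComplexOrder

/-- The positive semidefinite square root of a positive semidefinite matrix (the definition
`Matrix.PosSemidef.sqrt` of the older Mathlib, removed since). -/
noncomputable def Matrix.PosSemidef.sqrt {n 𝕜 : Type*} [Fintype n] [DecidableEq n] [RCLike 𝕜]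
    {A : Matrix n n 𝕜} (hA : A.PosSemidef) : Matrix n n 𝕜 :=
  hA.1.eigenvectorUnitary.1 * diagonal ((↑) ∘ (√·) ∘ hA.1.eigenvalues) *
  (star hA.1.eigenvectorUnitary : Matrix n n 𝕜)

end

/-!
The trace norm is dual to the operator norm: `tr √(WᵀW)` is the maximum of `tr (XᵀW)` over
contractions `X`, i.e. over `X` with `XᵀX ≤ 1`. The maximum is attained at `X = W U D⁻¹ᐟ² Uᵀ`,
where `WᵀW = U D Uᵀ`; that it is an upper bound is Cauchy–Schwarz on the columns of `W U`.
Splitting a contraction `X = [X₁; X₂]` that is optimal for `W = [W₁; W₂]` gives contractions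
`X₁`, `X₂` (since `X₁ᵀX₁ + X₂ᵀX₂ = XᵀX ≤ 1`) with `tr (XᵀW) = tr (X₁ᵀW₁) + tr (X₂ᵀW₂)`.
-/

namespace Matrix

variable {m n : Type*} [Fintype m] [Fintype n]

theorem trace_transpose_mul_le_sum_sqrt_mul_sqrt (Y Z : Matrix m n ℝ) :
    (Yᵀ * Z).trace ≤ ∑ j, √((Yᵀ * Y) j j) * √((Zᵀ * Z) j j) := by
  simp only [trace, diag, mul_apply, transpose_apply, ← sq]
  exact Finset.sum_le_sum fun j _ => Real.sum_mul_le_sqrt_mul_sqrt _ _ _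

omit [Fintype n] in
theorem transpose_mul_self_apply_le_one [DecidableEq n] {Y : Matrix m n ℝ}
    (hY : (1 - Yᵀ * Y).PosSemidef) (j : n) : (Yᵀ * Y) j j ≤ 1 := by
  simpa using hY.diag_nonneg (i := j)

variable [DecidableEq n]

theorem trace_transpose_mul_mul_of_mul_transpose_eq_one {U : Matrix n n ℝ} (hU : U * Uᵀ = 1)
    (X W : Matrix m n ℝ) : ((X * U)ᵀ * (W * U)).trace = (Xᵀ * W).trace := by
  rw [transpose_mul, Matrix.mul_assoc, trace_mul_comm, Matrix.mul_assoc, Matrix.mul_assoc, hU,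
    Matrix.mul_one]

theorem PosSemidef.one_sub_transpose_mul_self_mul {U : Matrix n n ℝ} (hU : Uᵀ * U = 1)
    {X : Matrix m n ℝ} (hX : (1 - Xᵀ * X).PosSemidef) :
    (1 - (X * U)ᵀ * (X * U)).PosSemidef := by
  have h := hX.conjTranspose_mul_mul_same U
  rw [conjTranspose_eq_transpose_of_trivial, Matrix.mul_sub, Matrix.sub_mul, Matrix.mul_one, hU]
    at h
  simpa only [transpose_mul, Matrix.mul_assoc] using h

theorem PosSemidef.one_sub_of_one_sub_add {m' : Type*} [Fintype m'] {X : Matrix m n ℝ}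
    {X' : Matrix m' n ℝ} (h : (1 - (Xᵀ * X + X'ᵀ * X')).PosSemidef) :
    (1 - Xᵀ * X).PosSemidef := by
  have h' := h.add (posSemidef_conjTranspose_mul_self X')
  rwa [conjTranspose_eq_transpose_of_trivial, sub_add_eq_sub_sub, sub_add_cancel] at h'

section Eigen

variable {A : Matrix n n ℝ} (hA : A.IsHermitian)

theorem IsHermitian.transpose_eigenvectorUnitary_mul_self :
    (hA.eigenvectorUnitary : Matrix n n ℝ)ᵀ * hA.eigenvectorUnitary = 1 := by
  rw [← conjTranspose_eq_transpose_of_trivial, ← star_eq_conjTranspose,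
    Unitary.coe_star_mul_self]

theorem IsHermitian.eigenvectorUnitary_mul_transpose_self :
    (hA.eigenvectorUnitary : Matrix n n ℝ) * (hA.eigenvectorUnitary : Matrix n n ℝ)ᵀ = 1 := by
  rw [← conjTranspose_eq_transpose_of_trivial, ← star_eq_conjTranspose,
    ← Unitary.coe_star, Unitary.coe_mul_star_self]

theorem IsHermitian.transpose_eigenvectorUnitary_mul_mul_eigenvectorUnitary :
    (hA.eigenvectorUnitary : Matrix n n ℝ)ᵀ * A * hA.eigenvectorUnitary =
      diagonal hA.eigenvalues := by
  have h := hA.conjStarAlgAut_star_eigenvectorUnitary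
  rw [Unitary.conjStarAlgAut_star_apply] at h
  simpa [star_eq_conjTranspose] using h

theorem IsHermitian.transpose_mul_self_mul_eigenvectorUnitary {W : Matrix m n ℝ}
    (hW : (Wᵀ * W).IsHermitian) :
    (W * (hW.eigenvectorUnitary : Matrix n n ℝ))ᵀ * (W * (hW.eigenvectorUnitary : Matrix n n ℝ))
      = diagonal hW.eigenvalues := by
  rw [← hW.transpose_eigenvectorUnitary_mul_mul_eigenvectorUnitary, transpose_mul]
  simp only [Matrix.mul_assoc]

end Eigen

theorem PosSemidef.trace_sqrt {A : Matrix n n ℝ} (hA : A.PosSemidef) :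
    hA.sqrt.trace = ∑ i, √(hA.1.eigenvalues i) := by
  rw [PosSemidef.sqrt, trace_mul_cycle, Unitary.coe_star_mul_self, one_mul, trace_diagonal]
  rfl

theorem trace_transpose_mul_le_trace_sqrt {W X : Matrix m n ℝ} (hW : (Wᵀ * W).PosSemidef)
    (hX : (1 - Xᵀ * X).PosSemidef) : (Xᵀ * W).trace ≤ hW.sqrt.trace := by
  set U : Matrix n n ℝ := (hW.1.eigenvectorUnitary : Matrix n n ℝ)
  have hWU := hW.1.transpose_mul_self_mul_eigenvectorUnitary
  have hXU := hX.one_sub_transpose_mul_self_mul hW.1.transpose_eigenvectorUnitary_mul_self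
  calc (Xᵀ * W).trace = ((X * U)ᵀ * (W * U)).trace :=
        (trace_transpose_mul_mul_of_mul_transpose_eq_one
          hW.1.eigenvectorUnitary_mul_transpose_self X W).symm
    _ ≤ ∑ j, √(((X * U)ᵀ * (X * U)) j j) * √(((W * U)ᵀ * (W * U)) j j) :=
        trace_transpose_mul_le_sum_sqrt_mul_sqrt _ _
    _ ≤ ∑ j, √(hW.1.eigenvalues j) := by
        gcongr with j
        rw [hWU, diagonal_apply_eq]
        exact mul_le_of_le_one_left (Real.sqrt_nonneg _)
          (Real.sqrt_le_one.mpr (transpose_mul_self_apply_le_one hXU j))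
    _ = hW.sqrt.trace := hW.trace_sqrt.symm

theorem exists_trace_transpose_mul_eq_trace_sqrt (W : Matrix m n ℝ) (hW : (Wᵀ * W).PosSemidef) :
    ∃ X : Matrix m n ℝ, (1 - Xᵀ * X).PosSemidef ∧ (Xᵀ * W).trace = hW.sqrt.trace := by
  set U : Matrix n n ℝ := (hW.1.eigenvectorUnitary : Matrix n n ℝ)
  set d := hW.1.eigenvalues
  -- Since `(√0)⁻¹ = 0` in Lean, zero eigenvalues need no case split.
  set D : Matrix n n ℝ := diagonal fun j => (√(d j))⁻¹
  have hWU : (W * U)ᵀ * (W * U) = diagonal d := hW.1.transpose_mul_self_mul_eigenvectorUnitary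
  have hUt₁ : Uᵀᵀ * Uᵀ = 1 := by
    rw [transpose_transpose]; exact hW.1.eigenvectorUnitary_mul_transpose_self
  have hUt₂ : Uᵀ * Uᵀᵀ = 1 := by
    rw [transpose_transpose]; exact hW.1.transpose_eigenvectorUnitary_mul_self
  have hW' : W = W * U * Uᵀ := by
    rw [Matrix.mul_assoc, hW.1.eigenvectorUnitary_mul_transpose_self, Matrix.mul_one]
  refine ⟨W * U * D * Uᵀ, ?_, ?_⟩
  · refine PosSemidef.one_sub_transpose_mul_self_mul hUt₁ ?_
    rw [transpose_mul, Matrix.mul_assoc, ← Matrix.mul_assoc (W * U)ᵀ, hWU, diagonal_transpose,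
      diagonal_mul_diagonal, diagonal_mul_diagonal, ← diagonal_one, diagonal_sub]
    refine PosSemidef.diagonal fun j => sub_nonneg.mpr ?_
    rw [← mul_assoc, ← div_eq_inv_mul, Real.div_sqrt]
    exact mul_inv_le_one
  · nth_rw 2 [hW']
    rw [trace_transpose_mul_mul_of_mul_transpose_eq_one hUt₂, transpose_mul,
      Matrix.mul_assoc, hWU, diagonal_transpose, diagonal_mul_diagonal, trace_diagonal,
      hW.trace_sqrt]
    exact Finset.sum_congr rfl fun j _ => by rw [← div_eq_inv_mul, Real.div_sqrt]

end Matrix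

/-- For the stacked matrix `W = [W₁; W₂]`, the sum of singular values of `W` is at most the
sum of singular values of `W₁` plus that of `W₂`:
`trace √(WᵀW) ≤ trace √(W₁ᵀW₁) + trace √(W₂ᵀW₂)`. -/
theorem sum_singular_values_stack_le {m₁ m₂ n : ℕ}
    (W₁ : Matrix (Fin m₁) (Fin n) ℝ) (W₂ : Matrix (Fin m₂) (Fin n) ℝ)
    (h₁ : (W₁ᵀ * W₁).PosSemidef) (h₂ : (W₂ᵀ * W₂).PosSemidef)
    (hW : (((Matrix.fromRows W₁ W₂))ᵀ * (Matrix.fromRows W₁ W₂)).PosSemidef) :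
    hW.sqrt.trace ≤ h₁.sqrt.trace + h₂.sqrt.trace := by
  obtain ⟨X, hX, hXW⟩ := exists_trace_transpose_mul_eq_trace_sqrt (fromRows W₁ W₂) hW
  rw [← fromRows_toRows X, transpose_fromRows, fromCols_mul_fromRows] at hX hXW
  have hX₁ : (1 - X.toRows₁ᵀ * X.toRows₁).PosSemidef := hX.one_sub_of_one_sub_add
  have hX₂ : (1 - X.toRows₂ᵀ * X.toRows₂).PosSemidef := by
    rw [add_comm] at hX
    exact hX.one_sub_of_one_sub_add
  calc hW.sqrt.trace = (X.toRows₁ᵀ * W₁).trace + (X.toRows₂ᵀ * W₂).trace := by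
        rw [← hXW, trace_add]
    _ ≤ h₁.sqrt.trace + h₂.sqrt.trace :=
        add_le_add (trace_transpose_mul_le_trace_sqrt h₁ hX₁)
          (trace_transpose_mul_le_trace_sqrt h₂ hX₂)
end

section
/- Let W be an m×n matrix such that WᵀW = (a−b)I + bJ with a > b ≥ 0 (a variable-agnostic workload). Then all diagonal entries of √(WᵀW) are equal, and each equals ((n−1)√(a−b) + √(a+(n−1)b))/n. -/
/-! The square root is `S = √(a-b)·I + c·J`: since `J² = nJ`, the matrix `S²` is again of the form
`x·I + y·J`, and `c = (√(a+(n-1)b) - √(a-b))/n ≥ 0` is the root of `2√(a-b)·c + n·c² = b` that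
keeps `S` positive semidefinite, so `S` is the unique positive semidefinite square root of `WᵀW`. -/

open Matrix

namespace Matrix

section Sqrt

variable {ι 𝕜 : Type*} [Fintype ι] [DecidableEq ι] [RCLike 𝕜]

open scoped ComplexOrder MatrixOrder

theorem PosSemidef.sqrt_eq_cfcSqrt {A : Matrix ι ι 𝕜} (hA : A.PosSemidef) :
    hA.sqrt = CFC.sqrt A := by
  rw [CFC.sqrt_eq_cfc, cfc_nnreal_eq_real _ A hA.nonneg, hA.1.cfc_eq]
  simp only [IsHermitian.cfc, PosSemidef.sqrt, Unitary.conjStarAlgAut_apply]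
  congr 3
  funext k
  simp [Real.coe_sqrt, hA.eigenvalues_nonneg k]

theorem PosSemidef.sqrt_eq_of_sq_eq {A S : Matrix ι ι 𝕜} (hA : A.PosSemidef)
    (hS : S.PosSemidef) (h : S ^ 2 = A) : hA.sqrt = S := by
  rw [hA.sqrt_eq_cfcSqrt, CFC.sqrt_eq_iff _ _ hA.nonneg hS.nonneg, ← sq, h]

end Sqrt

section AllOnes

variable {ι R : Type*}

theorem of_const_one_eq_vecMulVec [Semiring R] :
    of (fun _ _ : ι => (1 : R)) = vecMulVec 1 1 := by
  ext; simp [vecMulVec_apply]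

variable [Fintype ι]

theorem of_const_one_mul_self [Semiring R] :
    of (fun _ _ : ι => (1 : R)) * of (fun _ _ => 1)
      = (Fintype.card ι : R) • of (fun _ _ => 1) := by
  ext; simp [mul_apply]

variable [DecidableEq ι]

theorem smul_one_add_smul_of_const_one_sq [CommSemiring R] (s c : R) :
    (s • (1 : Matrix ι ι R) + c • of (fun _ _ => 1)) ^ 2
      = s ^ 2 • 1 + (2 * s * c + Fintype.card ι * c ^ 2) • of (fun _ _ => 1) := by
  rw [sq, add_mul, mul_add, mul_add]
  simp only [smul_mul_assoc, mul_smul_comm, one_mul, mul_one, of_const_one_mul_self, smul_smul]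
  module

theorem posSemidef_smul_one_add_smul_of_const_one {s c : ℝ} (hs : 0 ≤ s) (hc : 0 ≤ c) :
    (s • (1 : Matrix ι ι ℝ) + c • of (fun _ _ => 1)).PosSemidef := by
  refine (PosSemidef.one.smul hs).add (PosSemidef.smul ?_ hc)
  simpa [of_const_one_eq_vecMulVec] using posSemidef_vecMulVec_self_star (1 : ι → ℝ)

theorem PosSemidef.sqrt_smul_one_add_smul_of_const_one [Nonempty ι] {a b : ℝ} (hab : b < a)
    (hb : 0 ≤ b) {A : Matrix ι ι ℝ} (hA : A.PosSemidef)
    (hAab : A = (a - b) • (1 : Matrix ι ι ℝ) + b • of (fun _ _ => 1)) :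
    hA.sqrt = √(a - b) • (1 : Matrix ι ι ℝ)
      + ((√(a + (Fintype.card ι - 1) * b) - √(a - b)) / Fintype.card ι) • of (fun _ _ => 1) := by
  set k : ℝ := (Fintype.card ι : ℝ)
  have hk : 1 ≤ k := Nat.one_le_cast.mpr Fintype.card_pos
  have hsq₁ : √(a - b) ^ 2 = a - b := Real.sq_sqrt (by linarith)
  have hsq₂ : √(a + (k - 1) * b) ^ 2 = a + (k - 1) * b := Real.sq_sqrt (by nlinarith)
  have hle : √(a - b) ≤ √(a + (k - 1) * b) := Real.sqrt_le_sqrt (by nlinarith)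
  have hs₁ : 0 ≤ √(a - b) := Real.sqrt_nonneg _
  generalize √(a - b) = s₁ at *
  generalize √(a + (k - 1) * b) = s₂ at *
  refine hA.sqrt_eq_of_sq_eq
    (posSemidef_smul_one_add_smul_of_const_one hs₁ (by positivity)) ?_
  rw [smul_one_add_smul_of_const_one_sq, hAab, hsq₁]
  congr 2
  field_simp
  linear_combination k * (hsq₂ - hsq₁)

end AllOnes

end Matrix

/-- For a variable-agnostic workload `W` (i.e. `WᵀW = (a−b)·I + b·J` with `a > b ≥ 0`), all
diagonal entries of `√(WᵀW)` are equal, each being `((n−1)√(a−b) + √(a+(n−1)b))/n`. -/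
theorem sqrt_gram_diag_variable_agnostic {m n : ℕ} (a b : ℝ)
    (hab : b < a) (hb : 0 ≤ b)
    (W : Matrix (Fin m) (Fin n) ℝ)
    (hps : (Wᵀ * W).PosSemidef)
    (hGram : Wᵀ * W
      = (a - b) • (1 : Matrix (Fin n) (Fin n) ℝ) + b • Matrix.of (fun _ _ => (1 : ℝ))) :
    ∀ i : Fin n, hps.sqrt i i
      = (((n : ℝ) - 1) * Real.sqrt (a - b) + Real.sqrt (a + ((n : ℝ) - 1) * b)) / n := by
  intro i
  have : NeZero n := ⟨i.pos.ne'⟩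
  have hn : (n : ℝ) ≠ 0 := NeZero.ne _
  rw [hps.sqrt_smul_one_add_smul_of_const_one hab hb hGram, Fintype.card_fin]
  simp only [Matrix.add_apply, Matrix.smul_apply, one_apply_eq, of_apply, smul_eq_mul, mul_one]
  field_simp
  ring
end
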